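/- Let a ≥ 0 and α > 0, let A = (a_{nk}) be a non-negative regular summability matrix, and let f : [0,∞) → ℝ be continuous with |f(x)| ≤ M·(1+x²) for all x ≥ 0 and such that lim_{x→∞} f(x)/(1+x²) exists. Then the sequence x_n = ‖K_n^a(f) − f‖_{ρ_α}, where ‖g‖_{ρ_α} = sup_{x∈[0,∞)} |g(x)|/(1+x^{2+α}), is A-statistically convergent to 0; that is, for every ε > 0, lim_{n→∞} Σ_{k : x_k ≥ ε} a_{nk} = 0. -/

import Mathlib

open MeasureTheory Filter

noncomputable section

/-- Rising factorial `(n)_i = n(n+1)⋯(n+i-1)`, with `(n)_0 = 1`. -/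
def risingFac (n : ℕ) : ℕ → ℝ
  | 0 => 1
  | i + 1 => risingFac n i * ((n : ℝ) + i)

/-- `P_k(n,a) = Σ_{i=0}^{k} C(k,i) (n)_i a^(k-i)`. -/
def Pba (k n : ℕ) (a : ℝ) : ℝ :=
  ∑ i ∈ Finset.range (k + 1), (k.choose i : ℝ) * risingFac n i * a ^ (k - i)

/-- Generalized Baskakov basis function `W_{n,k}^a(x)`. -/
def Wgb (a : ℝ) (n k : ℕ) (x : ℝ) : ℝ :=
  Real.exp (-(a * x) / (1 + x)) * (Pba k n a / (Nat.factorial k : ℝ)) * x ^ k /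
    (1 + x) ^ (n + k)

/-- Generalized Baskakov–Kantorovich operator `K_n^a(f;x)`. -/
def Kgb (a : ℝ) (n : ℕ) (f : ℝ → ℝ) (x : ℝ) : ℝ :=
  ((n : ℝ) + 1) * ∑' k : ℕ,
    Wgb a n k x * ∫ t in ((k : ℝ) / ((n : ℝ) + 1))..(((k : ℝ) + 1) / ((n : ℝ) + 1)), f t

/-- Weighted norm `‖g‖_{ρ_α} = sup_{x≥0} |g(x)|/(1+x^{2+α})` with `ρ_α(x) = 1+x^{2+α}`. -/
def rhoAlphaNorm (α : ℝ) (g : ℝ → ℝ) : ℝ :=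
  ⨆ x : Set.Ici (0 : ℝ), |g x| / (1 + (x : ℝ) ^ ((2 : ℝ) + α))

/-!
The basis `W_{n,k}^a(x)` is, up to normalization, the Cauchy product of a negative binomial and
an exponential series in `u = x / (1 + x)`, so its moments of order `0, 1, 2` are explicit. Hence
the positive operator `K_n` reproduces constants and has second central moment
`K_n((t - x)²; x) ≤ (x² + x + (a + 1)²) / (n + 1)`. Uniform continuity on compacts together with
the quadratic growth of `f` gives `|f t - f x| ≤ ε + C (t - x)²` for `x ≤ B`, so `K_n f → f`
uniformly on `[0, B]`; for `x ≥ B` the bound `|K_n f - f| = O(1 + x²)` is small against the weight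
`1 + x^(2 + α)`. Thus `‖K_n f - f‖_{ρ_α} → 0`, and for a regular matrix ordinary convergence implies
A-statistical convergence: only finitely many indices are exceptional and each column of `A` tends
to `0`.
-/

open scoped Nat
open Finset Topology

lemma risingFac_eq_ascFactorial (n i : ℕ) : risingFac n i = (n.ascFactorial i : ℝ) := by
  induction i with
  | zero => simp [risingFac]
  | succ i ih => rw [risingFac, ih, Nat.ascFactorial_succ]; push_cast; ring

lemma risingFac_nonneg (n i : ℕ) : 0 ≤ risingFac n i := by
  rw [risingFac_eq_ascFactorial]; positivity

lemma risingFac_succ_eq_mul (n i : ℕ) : risingFac n (i + 1) = n * risingFac (n + 1) i := by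
  rw [risingFac_eq_ascFactorial, risingFac_eq_ascFactorial, Nat.ascFactorial_succ,
    ← Nat.succ_ascFactorial]
  push_cast; rfl

lemma hasSum_risingFac_div_factorial_mul_pow (n : ℕ) {u : ℝ} (hu : |u| < 1) :
    HasSum (fun i => risingFac n i / i ! * u ^ i) ((1 - u)⁻¹ ^ n) := by
  cases n with
  | zero =>
    convert hasSum_single (f := fun i => risingFac 0 i / i ! * u ^ i) 0 fun i hi => ?_ using 1
    · simp [risingFac]
    · obtain ⟨j, rfl⟩ := Nat.exists_eq_succ_of_ne_zero hi
      simp [risingFac_succ_eq_mul]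
  | succ m =>
    rw [inv_pow, ← one_div]
    refine (hasSum_choose_mul_geometric_of_norm_lt_one m (by simpa using hu)).congr_fun fun i => ?_
    rw [risingFac_eq_ascFactorial, Nat.ascFactorial_eq_factorial_mul_choose, add_comm m i,
      Nat.choose_symm_add]
    push_cast
    field_simp

lemma hasSum_pow_succ_mul_of_shift {w v : ℕ → ℝ} {c s : ℝ} (m : ℕ)
    (hshift : ∀ i : ℕ, ((i : ℝ) + 1) * w (i + 1) = c * v i)
    (hv : HasSum (fun i : ℕ => ((i : ℝ) + 1) ^ m * v i) s) :
    HasSum (fun i : ℕ => (i : ℝ) ^ (m + 1) * w i) (c * s) := by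
  refine (hasSum_nat_add_iff' 1).mp ?_
  rw [sum_range_one, Nat.cast_zero, zero_pow m.succ_ne_zero, zero_mul, sub_zero]
  refine (hv.mul_left c).congr_fun fun i => ?_
  push_cast
  rw [pow_succ, mul_assoc, hshift]
  ring

lemma hasSum_mul_of_shift {w v : ℕ → ℝ} {c s : ℝ}
    (hshift : ∀ i : ℕ, ((i : ℝ) + 1) * w (i + 1) = c * v i) (hv : HasSum v s) :
    HasSum (fun i : ℕ => (i : ℝ) * w i) (c * s) := by
  simpa using hasSum_pow_succ_mul_of_shift 0 hshift (by simpa using hv)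

structure HasMoments (f : ℕ → ℝ) (s₀ s₁ s₂ : ℝ) : Prop where
  hasSum_zero : HasSum f s₀
  hasSum_one : HasSum (fun i : ℕ => (i : ℝ) * f i) s₁
  hasSum_two : HasSum (fun i : ℕ => (i : ℝ) ^ 2 * f i) s₂

lemma HasMoments.of_shift {w v : ℕ → ℝ} {c s₀ t₀ t₁ : ℝ}
    (hw : HasSum w s₀) (hshift : ∀ i : ℕ, ((i : ℝ) + 1) * w (i + 1) = c * v i)
    (hv0 : HasSum v t₀) (hv1 : HasSum (fun i : ℕ => (i : ℝ) * v i) t₁) :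
    HasMoments w s₀ (c * t₀) (c * (t₁ + t₀)) where
  hasSum_zero := hw
  hasSum_one := hasSum_mul_of_shift hshift hv0
  hasSum_two := hasSum_pow_succ_mul_of_shift 1 hshift (by simpa [add_mul] using hv1.add hv0)

lemma hasMoments_risingFac (n : ℕ) {u : ℝ} (hu : |u| < 1) :
    HasMoments (fun i => risingFac n i / i ! * u ^ i) ((1 - u)⁻¹ ^ n)
      (n * u * (1 - u)⁻¹ ^ (n + 1))
      (n * u * ((n + 1) * u * (1 - u)⁻¹ ^ (n + 2) + (1 - u)⁻¹ ^ (n + 1))) := by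
  have hsum (m : ℕ) := hasSum_risingFac_div_factorial_mul_pow m hu
  have hshift (m i : ℕ) : ((i : ℝ) + 1) * (risingFac m (i + 1) / (i + 1)! * u ^ (i + 1)) =
      m * u * (risingFac (m + 1) i / i ! * u ^ i) := by
    rw [risingFac_succ_eq_mul, Nat.factorial_succ]
    push_cast
    field_simp
    ring
  have h := HasMoments.of_shift (hsum n) (hshift n) (hsum (n + 1))
    (hasSum_mul_of_shift (hshift (n + 1)) (hsum (n + 2)))
  push_cast at h
  exact h

lemma hasMoments_pow_div_factorial (y : ℝ) :
    HasMoments (fun j => y ^ j / j !) (Real.exp y) (y * Real.exp y)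
      (y * (y * Real.exp y + Real.exp y)) := by
  have hsum : HasSum (fun j => y ^ j / j !) (Real.exp y) := by
    rw [Real.exp_eq_exp_ℝ]; exact NormedSpace.expSeries_div_hasSum_exp y
  have hshift (i : ℕ) : ((i : ℝ) + 1) * (y ^ (i + 1) / (i + 1)!) = y * (y ^ i / i !) := by
    rw [Nat.factorial_succ]
    push_cast
    field_simp
    ring
  exact HasMoments.of_shift hsum hshift hsum (hasSum_mul_of_shift hshift hsum)

lemma hasSum_sum_antidiagonal_mul {f g : ℕ → ℝ} {s t : ℝ} (hf : HasSum f s) (hg : HasSum g t) :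
    HasSum (fun k => ∑ p ∈ antidiagonal k, f p.1 * g p.2) (s * t) := by
  have hf' := summable_norm_iff.mpr hf.summable
  have hg' := summable_norm_iff.mpr hg.summable
  rw [← hf.tsum_eq, ← hg.tsum_eq, tsum_mul_tsum_eq_tsum_sum_antidiagonal_of_summable_norm hf' hg']
  exact (summable_norm_sum_mul_antidiagonal_of_summable_norm hf' hg').of_norm.hasSum

lemma HasMoments.antidiagonal {f g : ℕ → ℝ} {s₀ s₁ s₂ t₀ t₁ t₂ : ℝ}
    (hf : HasMoments f s₀ s₁ s₂) (hg : HasMoments g t₀ t₁ t₂) :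
    HasMoments (fun k => ∑ p ∈ antidiagonal k, f p.1 * g p.2) (s₀ * t₀) (s₁ * t₀ + s₀ * t₁)
      (s₂ * t₀ + 2 * (s₁ * t₁) + s₀ * t₂) where
  hasSum_zero := hasSum_sum_antidiagonal_mul hf.hasSum_zero hg.hasSum_zero
  hasSum_one := by
    refine ((hasSum_sum_antidiagonal_mul hf.hasSum_one hg.hasSum_zero).add
      (hasSum_sum_antidiagonal_mul hf.hasSum_zero hg.hasSum_one)).congr_fun fun k => ?_
    rw [mul_sum, ← sum_add_distrib]
    refine sum_congr rfl fun p hp => ?_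
    rw [← mem_antidiagonal.mp hp]
    push_cast
    ring
  hasSum_two := by
    refine (((hasSum_sum_antidiagonal_mul hf.hasSum_two hg.hasSum_zero).add
      ((hasSum_sum_antidiagonal_mul hf.hasSum_one hg.hasSum_one).mul_left 2)).add
      (hasSum_sum_antidiagonal_mul hf.hasSum_zero hg.hasSum_two)).congr_fun fun k => ?_
    rw [mul_sum, mul_sum, ← sum_add_distrib, ← sum_add_distrib]
    refine sum_congr rfl fun p hp => ?_
    rw [← mem_antidiagonal.mp hp]
    push_cast
    ring

lemma HasMoments.hasSum_quadratic {f : ℕ → ℝ} {s₀ s₁ s₂ : ℝ} (hf : HasMoments f s₀ s₁ s₂)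
    (p q r : ℝ) :
    HasSum (fun i : ℕ => (p * (i : ℝ) ^ 2 + q * i + r) * f i) (p * s₂ + q * s₁ + r * s₀) :=
  (((hf.hasSum_two.mul_left p).add (hf.hasSum_one.mul_left q)).add
    (hf.hasSum_zero.mul_left r)).congr_fun fun i => by ring

lemma HasMoments.const_mul {f : ℕ → ℝ} {s₀ s₁ s₂ : ℝ} (hf : HasMoments f s₀ s₁ s₂) (c : ℝ) :
    HasMoments (fun i => c * f i) (c * s₀) (c * s₁) (c * s₂) where
  hasSum_zero := hf.hasSum_zero.mul_left c
  hasSum_one := (hf.hasSum_one.mul_left c).congr_fun fun i => by ring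
  hasSum_two := (hf.hasSum_two.mul_left c).congr_fun fun i => by ring

lemma Pba_div_factorial_mul_pow (k n : ℕ) (a u : ℝ) :
    Pba k n a / k ! * u ^ k =
      ∑ p ∈ antidiagonal k, risingFac n p.1 / p.1 ! * u ^ p.1 * ((a * u) ^ p.2 / p.2 !) := by
  rw [Nat.sum_antidiagonal_eq_sum_range_succ_mk, Pba, sum_div, sum_mul]
  refine sum_congr rfl fun i hi => ?_
  have hik : i ≤ k := Nat.lt_succ_iff.mp (mem_range.mp hi)
  rw [Nat.cast_choose ℝ hik, mul_pow, ← Nat.add_sub_cancel' hik, pow_add, Nat.add_sub_cancel_left]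
  field_simp

lemma Wgb_eq_mul_sum_antidiagonal (a x : ℝ) (hx : 0 ≤ x) (n k : ℕ) :
    Wgb a n k x = (Real.exp (a * (x / (1 + x))) * (1 + x) ^ n)⁻¹ *
      ∑ p ∈ antidiagonal k, risingFac n p.1 / p.1 ! * (x / (1 + x)) ^ p.1 *
        ((a * (x / (1 + x))) ^ p.2 / p.2 !) := by
  have : 1 + x ≠ 0 := by positivity
  rw [← Pba_div_factorial_mul_pow, Wgb, mul_div_assoc, neg_div, Real.exp_neg, div_pow, pow_add]
  field_simp

lemma hasMoments_Wgb (a : ℝ) {x : ℝ} (hx : 0 ≤ x) (n : ℕ) :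
    HasMoments (fun k => Wgb a n k x) 1 (n * x + a * (x / (1 + x)))
      (n * (n + 1) * x ^ 2 + n * x + 2 * n * x * (a * (x / (1 + x)))
        + (a * (x / (1 + x))) ^ 2 + a * (x / (1 + x))) := by
  have h₁ : 0 < 1 + x := by positivity
  have hu : |x / (1 + x)| < 1 := by
    rw [abs_of_nonneg (by positivity), div_lt_one h₁]; linarith
  have hq : (1 - x / (1 + x))⁻¹ = 1 + x := by field_simp; ring
  have h := ((hasMoments_risingFac n hu).antidiagonal
    (hasMoments_pow_div_factorial (a * (x / (1 + x))))).const_mul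
    (Real.exp (a * (x / (1 + x))) * (1 + x) ^ n)⁻¹
  rw [hq] at h
  convert h using 1
  · funext k; exact Wgb_eq_mul_sum_antidiagonal a x hx n k
  all_goals field_simp
  all_goals ring

lemma Pba_nonneg {a : ℝ} (ha : 0 ≤ a) (k n : ℕ) : 0 ≤ Pba k n a :=
  sum_nonneg fun i _ => by have := risingFac_nonneg n i; positivity

lemma Wgb_nonneg {a x : ℝ} (ha : 0 ≤ a) (hx : 0 ≤ x) (n k : ℕ) : 0 ≤ Wgb a n k x := by
  have := Pba_nonneg ha k n
  unfold Wgb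
  positivity

def KgbTerm (a : ℝ) (n : ℕ) (g : ℝ → ℝ) (x : ℝ) (k : ℕ) : ℝ :=
  Wgb a n k x * ∫ t in (k : ℝ) / ((n : ℝ) + 1)..((k : ℝ) + 1) / ((n : ℝ) + 1), g t

lemma Kgb_eq_tsum_KgbTerm (a : ℝ) (n : ℕ) (g : ℝ → ℝ) (x : ℝ) :
    Kgb a n g x = ((n : ℝ) + 1) * ∑' k, KgbTerm a n g x k := rfl

lemma integral_sub_sq (l r x : ℝ) :
    ∫ t in l..r, (t - x) ^ 2 = ((r - x) ^ 3 - (l - x) ^ 3) / 3 := by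
  rw [intervalIntegral.integral_comp_sub_right (fun t => t ^ 2), integral_pow]
  norm_num

lemma hasSum_KgbTerm_one (a : ℝ) {x : ℝ} (hx : 0 ≤ x) (n : ℕ) :
    HasSum (KgbTerm a n (fun _ => 1) x) (1 / ((n : ℝ) + 1)) := by
  have h := (hasMoments_Wgb a hx n).hasSum_zero.mul_right (1 / ((n : ℝ) + 1))
  rw [one_mul] at h
  refine h.congr_fun fun k => ?_
  simp only [KgbTerm, intervalIntegral.integral_const, smul_eq_mul, mul_one]
  ring

lemma hasSum_KgbTerm_sq_sub (a : ℝ) {x : ℝ} (hx : 0 ≤ x) (n : ℕ) :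
    HasSum (KgbTerm a n (fun t => (t - x) ^ 2) x)
      (((n + 1) * x ^ 2 - 2 * (a * (x / (1 + x))) * x + (n - 1) * x + (a * (x / (1 + x))) ^ 2
        + 2 * (a * (x / (1 + x))) + 1 / 3) / ((n : ℝ) + 1) ^ 3) := by
  have hN : (n : ℝ) + 1 ≠ 0 := by positivity
  have h₁ : 1 + x ≠ 0 := by positivity
  convert ((hasMoments_Wgb a hx n).hasSum_quadratic (1 / ((n : ℝ) + 1) ^ 3)
    (1 / ((n : ℝ) + 1) ^ 3 - 2 * x / ((n : ℝ) + 1) ^ 2)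
    (1 / (3 * ((n : ℝ) + 1) ^ 3) - x / ((n : ℝ) + 1) ^ 2 + x ^ 2 / ((n : ℝ) + 1))).congr_fun
    (fun k => ?_) using 1
  · field_simp
    ring
  · -- the integral of `(t - x)²` over the `k`-th interval is a quadratic polynomial in `k`
    rw [KgbTerm, integral_sub_sq]
    field_simp
    ring

lemma Kgb_sq_sub_le {a x : ℝ} (ha : 0 ≤ a) (hx : 0 ≤ x) (n : ℕ) :
    Kgb a n (fun t => (t - x) ^ 2) x ≤ (x ^ 2 + x + (a + 1) ^ 2) / ((n : ℝ) + 1) := by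
  have hN : (0 : ℝ) < (n : ℝ) + 1 := by positivity
  have hu₁ : x / (1 + x) ≤ 1 := by rw [div_le_one (by positivity)]; linarith
  have hS := hasSum_KgbTerm_sq_sub a hx n
  set y := a * (x / (1 + x))
  have hy₀ : 0 ≤ y := by positivity
  have hy₁ : y ≤ a := mul_le_of_le_one_right ha hu₁
  have hn : (0 : ℝ) ≤ n := n.cast_nonneg
  calc Kgb a n (fun t => (t - x) ^ 2) x
      = ((n + 1) * x ^ 2 - 2 * y * x + (n - 1) * x + y ^ 2 + 2 * y + 1 / 3)
          / ((n : ℝ) + 1) ^ 2 := by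
        rw [Kgb_eq_tsum_KgbTerm, hS.tsum_eq]
        field_simp
    _ ≤ ((n + 1) * (x ^ 2 + x + (a + 1) ^ 2)) / ((n : ℝ) + 1) ^ 2 := by
        gcongr
        nlinarith [mul_nonneg hy₀ hx, mul_nonneg hn (sq_nonneg (a + 1)), mul_le_mul hy₁ hy₁ hy₀ ha]
    _ = (x ^ 2 + x + (a + 1) ^ 2) / ((n : ℝ) + 1) := by
        field_simp

lemma natCast_div_succ_nonneg_and_le (n k : ℕ) :
    0 ≤ (k : ℝ) / ((n : ℝ) + 1) ∧ (k : ℝ) / ((n : ℝ) + 1) ≤ ((k : ℝ) + 1) / ((n : ℝ) + 1) :=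
  ⟨by positivity, by gcongr; linarith⟩

lemma norm_KgbTerm_le {a x : ℝ} (ha : 0 ≤ a) (hx : 0 ≤ x) {g h : ℝ → ℝ} (hh : Continuous h)
    (hgh : ∀ t, 0 ≤ t → |g t| ≤ h t) (n k : ℕ) : ‖KgbTerm a n g x k‖ ≤ KgbTerm a n h x k := by
  obtain ⟨h₀, hle⟩ := natCast_div_succ_nonneg_and_le n k
  have hW := Wgb_nonneg ha hx n k
  rw [KgbTerm, KgbTerm, norm_mul, Real.norm_of_nonneg hW]
  refine mul_le_mul_of_nonneg_left (intervalIntegral.norm_integral_le_of_norm_le hle ?_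
    (hh.intervalIntegrable _ _)) hW
  exact ae_of_all _ fun t ht => (Real.norm_eq_abs _).trans_le (hgh t (h₀.trans ht.1.le))

lemma hasSum_KgbTerm_const_add_mul_sq_sub (a : ℝ) {x : ℝ} (hx : 0 ≤ x) (n : ℕ) (c C : ℝ) :
    HasSum (KgbTerm a n (fun t => c + C * (t - x) ^ 2) x)
      (c * (1 / ((n : ℝ) + 1)) + C * ∑' k, KgbTerm a n (fun t => (t - x) ^ 2) x k) := by
  refine (((hasSum_KgbTerm_one a hx n).mul_left c).add
    ((hasSum_KgbTerm_sq_sub a hx n).summable.hasSum.mul_left C)).congr_fun fun k => ?_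
  simp only [KgbTerm]
  rw [intervalIntegral.integral_add intervalIntegrable_const
    ((by fun_prop : Continuous fun t => C * (t - x) ^ 2).intervalIntegrable _ _),
    intervalIntegral.integral_const_mul]
  simp only [intervalIntegral.integral_const, smul_eq_mul]
  ring

section Domination

variable {a x c C : ℝ} {g : ℝ → ℝ}

lemma summable_KgbTerm_of_abs_le (ha : 0 ≤ a) (hx : 0 ≤ x)
    (hg : ∀ t, 0 ≤ t → |g t| ≤ c + C * (t - x) ^ 2) (n : ℕ) : Summable (KgbTerm a n g x) :=
  .of_norm_bounded (hasSum_KgbTerm_const_add_mul_sq_sub a hx n c C).summable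
    (norm_KgbTerm_le ha hx (by fun_prop) hg n)

lemma abs_Kgb_le_of_abs_le (ha : 0 ≤ a) (hx : 0 ≤ x)
    (hg : ∀ t, 0 ≤ t → |g t| ≤ c + C * (t - x) ^ 2) (n : ℕ) :
    |Kgb a n g x| ≤ c + C * Kgb a n (fun t => (t - x) ^ 2) x := by
  have hN : (0 : ℝ) < (n : ℝ) + 1 := by positivity
  have hS := tsum_of_norm_bounded (hasSum_KgbTerm_const_add_mul_sq_sub a hx n c C)
    (norm_KgbTerm_le ha hx (by fun_prop) hg n)
  rw [Real.norm_eq_abs] at hS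
  rw [Kgb_eq_tsum_KgbTerm, Kgb_eq_tsum_KgbTerm, abs_mul, abs_of_pos hN]
  calc ((n : ℝ) + 1) * |∑' k, KgbTerm a n g x k|
      ≤ ((n : ℝ) + 1) * (c * (1 / ((n : ℝ) + 1))
          + C * ∑' k, KgbTerm a n (fun t => (t - x) ^ 2) x k) := by gcongr
    _ = c + C * (((n : ℝ) + 1) * ∑' k, KgbTerm a n (fun t => (t - x) ^ 2) x k) := by
        field_simp

end Domination

lemma Kgb_sub_const (a : ℝ) {x : ℝ} (hx : 0 ≤ x) {g : ℝ → ℝ} (hg : ContinuousOn g (Set.Ici 0))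
    {n : ℕ} (hs : Summable (KgbTerm a n g x)) (c : ℝ) :
    Kgb a n (fun t => g t - c) x = Kgb a n g x - c := by
  have h₁ := hasSum_KgbTerm_one a hx n
  have hterm (k : ℕ) : KgbTerm a n (fun t => g t - c) x k =
      KgbTerm a n g x k - c * KgbTerm a n (fun _ => 1) x k := by
    obtain ⟨h₀, hle⟩ := natCast_div_succ_nonneg_and_le n k
    simp only [KgbTerm]
    rw [intervalIntegral.integral_sub
      ((hg.mono fun t ht => h₀.trans ht.1).intervalIntegrable_of_Icc hle) intervalIntegrable_const]
    simp only [intervalIntegral.integral_const, smul_eq_mul]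
    ring
  rw [Kgb_eq_tsum_KgbTerm, Kgb_eq_tsum_KgbTerm, tsum_congr hterm,
    hs.tsum_sub (h₁.summable.mul_left c), tsum_mul_left, h₁.tsum_eq]
  field_simp

lemma abs_Kgb_sub_le {a x c C : ℝ} (ha : 0 ≤ a) (hx : 0 ≤ x) {f : ℝ → ℝ}
    (hf : ContinuousOn f (Set.Ici 0)) (hC : 0 ≤ C)
    (hfx : ∀ t, 0 ≤ t → |f t - f x| ≤ c + C * (t - x) ^ 2) (n : ℕ) :
    |Kgb a n f x - f x| ≤ c + C * ((x ^ 2 + x + (a + 1) ^ 2) / ((n : ℝ) + 1)) := by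
  have hs : Summable (KgbTerm a n f x) := by
    refine summable_KgbTerm_of_abs_le (c := |f x| + c) (C := C) ha hx (fun t ht => ?_) n
    have := hfx t ht
    have := abs_sub_abs_le_abs_sub (f t) (f x)
    linarith
  rw [← Kgb_sub_const a hx hf hs]
  calc |Kgb a n (fun t => f t - f x) x| ≤ c + C * Kgb a n (fun t => (t - x) ^ 2) x :=
        abs_Kgb_le_of_abs_le ha hx hfx n
    _ ≤ c + C * ((x ^ 2 + x + (a + 1) ^ 2) / ((n : ℝ) + 1)) := by
        gcongr
        exact Kgb_sq_sub_le ha hx n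

section Growth

variable {f : ℝ → ℝ} {M : ℝ}

lemma nonneg_of_abs_le_mul_one_add_sq (hgrow : ∀ x : ℝ, 0 ≤ x → |f x| ≤ M * (1 + x ^ 2)) :
    0 ≤ M := by
  simpa using (abs_nonneg (f 0)).trans (hgrow 0 le_rfl)

lemma abs_sub_le_of_abs_le_mul_one_add_sq (hgrow : ∀ x : ℝ, 0 ≤ x → |f x| ≤ M * (1 + x ^ 2))
    {x t : ℝ} (hx : 0 ≤ x) (ht : 0 ≤ t) :
    |f t - f x| ≤ M * (2 + 3 * x ^ 2) + 2 * M * (t - x) ^ 2 := by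
  have hM := nonneg_of_abs_le_mul_one_add_sq hgrow
  have ht2 : t ^ 2 ≤ 2 * (t - x) ^ 2 + 2 * x ^ 2 := by nlinarith [sq_nonneg (t - 2 * x)]
  calc |f t - f x| ≤ |f t| + |f x| := abs_sub _ _
    _ ≤ M * (1 + t ^ 2) + M * (1 + x ^ 2) := add_le_add (hgrow t ht) (hgrow x hx)
    _ ≤ M * (2 + 3 * x ^ 2) + 2 * M * (t - x) ^ 2 := by nlinarith [mul_le_mul_of_nonneg_left ht2 hM]

lemma abs_Kgb_sub_le_mul_one_add_sq {a : ℝ} (ha : 0 ≤ a) (hf : ContinuousOn f (Set.Ici 0))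
    (hgrow : ∀ x : ℝ, 0 ≤ x → |f x| ≤ M * (1 + x ^ 2)) (n : ℕ) {x : ℝ} (hx : 0 ≤ x) :
    |Kgb a n f x - f x| ≤ M * (2 * (a + 1) ^ 2 + 6) * (1 + x ^ 2) := by
  have hM := nonneg_of_abs_le_mul_one_add_sq hgrow
  have hq : (x ^ 2 + x + (a + 1) ^ 2) / ((n : ℝ) + 1) ≤ x ^ 2 + x + (a + 1) ^ 2 :=
    div_le_self (by positivity) (by linarith [n.cast_nonneg (α := ℝ)])
  calc |Kgb a n f x - f x|
      ≤ M * (2 + 3 * x ^ 2) + 2 * M * ((x ^ 2 + x + (a + 1) ^ 2) / ((n : ℝ) + 1)) :=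
        abs_Kgb_sub_le ha hx hf (by positivity)
          (fun t ht => abs_sub_le_of_abs_le_mul_one_add_sq hgrow hx ht) n
    _ ≤ M * (2 * (a + 1) ^ 2 + 6) * (1 + x ^ 2) := by
        nlinarith [mul_le_mul_of_nonneg_left hq hM, mul_nonneg hM (sq_nonneg (x - 1)),
          mul_nonneg hM (mul_nonneg (sq_nonneg (a + 1)) (sq_nonneg x))]

lemma exists_abs_sub_le_add_mul_sq (hf : ContinuousOn f (Set.Ici 0))
    (hgrow : ∀ x : ℝ, 0 ≤ x → |f x| ≤ M * (1 + x ^ 2)) (B : ℝ) {ε : ℝ} (hε : 0 < ε) :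
    ∃ C, 0 ≤ C ∧ ∀ x ∈ Set.Icc 0 B, ∀ t, 0 ≤ t → |f t - f x| ≤ ε + C * (t - x) ^ 2 := by
  have hM := nonneg_of_abs_le_mul_one_add_sq hgrow
  obtain ⟨δ, hδ, hfδ⟩ := Metric.uniformContinuousOn_iff.mp
    (isCompact_Icc.uniformContinuousOn_of_continuous (hf.mono fun t ht => ht.1)
      : UniformContinuousOn f (Set.Icc 0 (B + 1))) ε hε
  set δ' := min δ 1
  have hδ' : 0 < δ' := lt_min hδ one_pos
  refine ⟨M * (2 + 3 * B ^ 2) / δ' ^ 2 + 2 * M, by positivity, fun x ⟨hx0, hxB⟩ t ht => ?_⟩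
  have hCt : 0 ≤ (M * (2 + 3 * B ^ 2) / δ' ^ 2 + 2 * M) * (t - x) ^ 2 := by positivity
  rcases lt_or_ge |t - x| δ' with hnear | hfar
  · have htB : t ≤ B + 1 := by linarith [(abs_lt.mp hnear).2, min_le_right δ 1]
    have := hfδ t ⟨ht, htB⟩ x ⟨hx0, by linarith⟩
      (by rw [Real.dist_eq]; exact hnear.trans_le (min_le_left δ 1))
    rw [Real.dist_eq] at this
    linarith
  · -- far from `x`, the growth bound is absorbed by `(t - x)² / δ'² ≥ 1`
    have hsq : 1 ≤ (t - x) ^ 2 / δ' ^ 2 := by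
      rw [one_le_div (by positivity), ← sq_abs (t - x)]
      exact pow_le_pow_left₀ hδ'.le hfar 2
    have hB : M * (2 + 3 * x ^ 2) ≤ M * (2 + 3 * B ^ 2) := by gcongr
    calc |f t - f x| ≤ M * (2 + 3 * x ^ 2) + 2 * M * (t - x) ^ 2 :=
          abs_sub_le_of_abs_le_mul_one_add_sq hgrow hx0 ht
      _ ≤ M * (2 + 3 * B ^ 2) * ((t - x) ^ 2 / δ' ^ 2) + 2 * M * (t - x) ^ 2 := by
          nlinarith [mul_le_mul_of_nonneg_left hsq (by positivity : 0 ≤ M * (2 + 3 * B ^ 2))]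
      _ ≤ ε + (M * (2 + 3 * B ^ 2) / δ' ^ 2 + 2 * M) * (t - x) ^ 2 := by
          rw [mul_div_assoc']
          field_simp
          nlinarith

end Growth

lemma eventually_mul_one_add_sq_le {α C ε : ℝ} (hα : 0 < α) (hC : 0 ≤ C) (hε : 0 < ε) :
    ∀ᶠ x in atTop, C * (1 + x ^ 2) ≤ ε * (1 + x ^ ((2 : ℝ) + α)) := by
  filter_upwards [(tendsto_rpow_atTop hα).eventually_ge_atTop (2 * C / ε),
    eventually_ge_atTop 1] with x hxα hx
  have hx0 : 0 < x := by linarith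
  rw [Real.rpow_add hx0, Real.rpow_two]
  rw [div_le_iff₀ hε] at hxα
  have hx2 : C ≤ C * x ^ 2 := le_mul_of_one_le_right hC (by nlinarith)
  nlinarith [mul_le_mul_of_nonneg_left hxα (sq_nonneg x)]

lemma rhoAlphaNorm_nonneg (α : ℝ) (g : ℝ → ℝ) : 0 ≤ rhoAlphaNorm α g :=
  Real.iSup_nonneg fun x => div_nonneg (abs_nonneg _)
    (by have := Real.rpow_nonneg x.2 ((2 : ℝ) + α); linarith)

lemma rhoAlphaNorm_le {α ε : ℝ} {g : ℝ → ℝ}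
    (h : ∀ x, 0 ≤ x → |g x| / (1 + x ^ ((2 : ℝ) + α)) ≤ ε) : rhoAlphaNorm α g ≤ ε :=
  ciSup_le fun x => h x x.2

lemma eventually_rhoAlphaNorm_Kgb_sub_le {a α M : ℝ} (ha : 0 ≤ a) (hα : 0 < α) {f : ℝ → ℝ}
    (hf : ContinuousOn f (Set.Ici 0)) (hgrow : ∀ x : ℝ, 0 ≤ x → |f x| ≤ M * (1 + x ^ 2))
    {ε : ℝ} (hε : 0 < ε) :
    ∀ᶠ n : ℕ in atTop, rhoAlphaNorm α (fun x => Kgb a n f x - f x) ≤ ε := by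
  have hM := nonneg_of_abs_le_mul_one_add_sq hgrow
  obtain ⟨B, hB⟩ := (eventually_mul_one_add_sq_le hα
    (by positivity : 0 ≤ M * (2 * (a + 1) ^ 2 + 6)) hε).exists_forall_of_atTop
  obtain ⟨C, hC, hloc⟩ := exists_abs_sub_le_add_mul_sq hf hgrow B (half_pos hε)
  have hlim := (tendsto_one_div_add_atTop_nhds_zero_nat (𝕜 := ℝ)).const_mul
    (C * (B ^ 2 + B + (a + 1) ^ 2))
  rw [mul_zero] at hlim
  filter_upwards [hlim.eventually (eventually_le_nhds (half_pos hε))] with n hn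
  refine rhoAlphaNorm_le fun x hx => ?_
  have hden : 1 ≤ 1 + x ^ ((2 : ℝ) + α) := by
    have := Real.rpow_nonneg hx ((2 : ℝ) + α); linarith
  rw [div_le_iff₀ (by linarith)]
  rcases le_or_gt x B with hxB | hBx
  · have hq : C * ((x ^ 2 + x + (a + 1) ^ 2) / ((n : ℝ) + 1))
        ≤ C * (B ^ 2 + B + (a + 1) ^ 2) * (1 / ((n : ℝ) + 1)) := by
      rw [mul_one_div, mul_div_assoc]
      gcongr
    calc |Kgb a n f x - f x| ≤ ε / 2 + C * ((x ^ 2 + x + (a + 1) ^ 2) / ((n : ℝ) + 1)) :=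
          abs_Kgb_sub_le ha hx hf hC (hloc x ⟨hx, hxB⟩) n
      _ ≤ ε := by linarith
      _ ≤ ε * (1 + x ^ ((2 : ℝ) + α)) := le_mul_of_one_le_right hε.le hden
  · exact (abs_Kgb_sub_le_mul_one_add_sq ha hf hgrow n hx).trans (hB x hBx.le)

theorem tendsto_rhoAlphaNorm_Kgb_sub {a α M : ℝ} (ha : 0 ≤ a) (hα : 0 < α) {f : ℝ → ℝ}
    (hf : ContinuousOn f (Set.Ici 0)) (hgrow : ∀ x : ℝ, 0 ≤ x → |f x| ≤ M * (1 + x ^ 2)) :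
    Tendsto (fun n : ℕ => rhoAlphaNorm α (fun x => Kgb a n f x - f x)) atTop (𝓝 0) :=
  tendsto_order.2 ⟨fun _ hb => .of_forall fun _ => hb.trans_le (rhoAlphaNorm_nonneg _ _),
    fun _ hε => (eventually_rhoAlphaNorm_Kgb_sub_le ha hα hf hgrow (half_pos hε)).mono
      fun _ hn => hn.trans_lt (half_lt_self hε)⟩

def AStatTendsto (A : ℕ → ℕ → ℝ) (x : ℕ → ℝ) (L : ℝ) : Prop :=
  ∀ ε > (0 : ℝ), Tendsto (fun n : ℕ => ∑' k : {k : ℕ // ε ≤ |x k - L|}, A n (k : ℕ)) atTop (𝓝 0)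

section RegularMatrix

variable {A : ℕ → ℕ → ℝ}
  (hAreg : ∀ (x : ℕ → ℝ) (L : ℝ), Tendsto x atTop (𝓝 L) →
    Tendsto (fun n : ℕ => ∑' k : ℕ, A n k * x k) atTop (𝓝 L))
include hAreg

lemma tendsto_column_of_regular (j : ℕ) : Tendsto (fun n => A n j) atTop (𝓝 0) := by
  have hδ : Tendsto (fun k : ℕ => if k = j then (1 : ℝ) else 0) atTop (𝓝 0) :=
    tendsto_const_nhds.congr' <| (eventually_gt_atTop j).mono fun k hk => (if_neg hk.ne').symm
  simpa using hAreg _ 0 hδ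

lemma aStatTendsto_of_tendsto {x : ℕ → ℝ} {L : ℝ} (hx : Tendsto x atTop (𝓝 L)) :
    AStatTendsto A x L := by
  intro ε hε
  obtain ⟨N, hN⟩ := Metric.tendsto_atTop.mp hx ε hε
  have : Finite {k : ℕ // ε ≤ |x k - L|} :=
    (Set.finite_lt_nat N).subset fun k hk => not_le.mp fun hNk => (hN k hNk).not_ge hk
  have := Fintype.ofFinite {k : ℕ // ε ≤ |x k - L|}
  simp_rw [tsum_fintype]
  simpa using tendsto_finsetSum (univ : Finset {k : ℕ // ε ≤ |x k - L|})
    fun k _ => tendsto_column_of_regular hAreg k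

end RegularMatrix

theorem statement10_general (a α M : ℝ) (ha : 0 ≤ a) (hα : 0 < α) (A : ℕ → ℕ → ℝ)
    (hAreg : ∀ (x : ℕ → ℝ) (L : ℝ), Tendsto x atTop (nhds L) →
      Tendsto (fun n : ℕ => ∑' k : ℕ, A n k * x k) atTop (nhds L))
    (f : ℝ → ℝ) (hcont : ContinuousOn f (Set.Ici 0))
    (hgrow : ∀ x : ℝ, 0 ≤ x → |f x| ≤ M * (1 + x ^ 2)) :
    ∀ ε > (0 : ℝ),
      Tendsto (fun n : ℕ =>
          ∑' k : {k : ℕ // ε ≤ |rhoAlphaNorm α (fun x => Kgb a k f x - f x) - 0|},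
            A n (k : ℕ)) atTop (nhds 0) :=
  aStatTendsto_of_tendsto hAreg (tendsto_rhoAlphaNorm_Kgb_sub ha hα hcont hgrow)

/-- A-statistical convergence in the weighted norm. -/
theorem statement10 (a α M : ℝ) (ha : 0 ≤ a) (hα : 0 < α) (A : ℕ → ℕ → ℝ)
    (hApos : ∀ n k : ℕ, 0 ≤ A n k)
    (hAreg : ∀ (x : ℕ → ℝ) (L : ℝ), Tendsto x atTop (nhds L) →
      Tendsto (fun n : ℕ => ∑' k : ℕ, A n k * x k) atTop (nhds L))
    (f : ℝ → ℝ) (hcont : ContinuousOn f (Set.Ici 0))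
    (hgrow : ∀ x : ℝ, 0 ≤ x → |f x| ≤ M * (1 + x ^ 2))
    (hlim : ∃ L : ℝ, Tendsto (fun x : ℝ => f x / (1 + x ^ 2)) atTop (nhds L)) :
    ∀ ε > (0 : ℝ),
      Tendsto (fun n : ℕ =>
          ∑' k : {k : ℕ // ε ≤ |rhoAlphaNorm α (fun x => Kgb a k f x - f x) - 0|},
            A n (k : ℕ)) atTop (nhds 0) :=
  statement10_general a α M ha hα A hAreg f hcont hgrow
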